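/- arXiv:0902.2673 — 3 statements merged into one kernel-verified Lean document; each statement's English description precedes it below -/
import Mathlib

section
/- Policy improvement decreases the average cost: let u and û be policies with associated invariant probability measures ν_u, ν_û for the kernels G(·, u), G(·, û), let ℒ, L f, H r denote the associated positive functionals with 0 < ℒ(x, Γ) for all x, Γ, and let (ρ_u, h_u) solve h_u(x) = −ρ_u ℒ(x, u(x)) + Lf(x, u(x)) + Hr(x, u(x)) + G h_u(x, u(x)). If û achieves the pointwise minimum, i.e. for all x, −ρ_u ℒ(x, û(x)) + Lf(x, û(x)) + Hr(x, û(x)) + G h_u(x, û(x)) ≤ −ρ_u ℒ(x, u(x)) + Lf(x, u(x)) + Hr(x, u(x)) + G h_u(x, u(x)) = h_u(x), and ρ_û is defined by ρ_û = ∫ [Lf(y,û(y)) + Hr(y,û(y))] dν_û(y) / ∫ ℒ(y,û(y)) dν_û(y) with the pseudo-Poisson equation for û holding analogously, then ρ_û ≤ ρ_u. -/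
open Filter MeasureTheory

/-! Integrating the one-step inequality `-ρ_u ℒ(·, û) + Lf(·, û) + Hr(·, û) + G h_u(·, û) ≤ h_u`
against `ν_û` cancels the `h_u` terms by invariance and leaves
`∫ (Lf + Hr) dν_û ≤ ρ_u ∫ ℒ dν_û`; dividing by `∫ ℒ dν_û > 0` gives `ρ_û ≤ ρ_u`. -/

theorem integral_le_mul_integral_of_supersolution {E : Type*} [MeasurableSpace E]
    {μ : Measure E} {c ℓ h Ph : E → ℝ} {ρ : ℝ}
    (hc : Integrable c μ) (hℓ : Integrable ℓ μ) (hh : Integrable h μ) (hPh : Integrable Ph μ)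
    (hinv : ∫ x, Ph x ∂μ = ∫ x, h x ∂μ)
    (hsuper : ∀ᵐ x ∂μ, -ρ * ℓ x + c x + Ph x ≤ h x) :
    ∫ x, c x ∂μ ≤ ρ * ∫ x, ℓ x ∂μ := by
  have hmono : ∫ x, (-ρ * ℓ x + c x + Ph x) ∂μ ≤ ∫ x, h x ∂μ :=
    integral_mono_ae (((hℓ.const_mul (-ρ)).add hc).add hPh) hh hsuper
  rw [integral_add (f := fun x => -ρ * ℓ x + c x) ((hℓ.const_mul (-ρ)).add hc) hPh,
    integral_add (f := fun x => -ρ * ℓ x) (hℓ.const_mul (-ρ)) hc, integral_const_mul, hinv]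
    at hmono
  linarith

theorem policy_improvement_general
    {E : Type*} [MeasurableSpace E]
    (νhat : Measure E)
    -- the functionals associated to the policies u and hat
    (Lcu Lfu Hru Lchat Lfhat Hrhat : E → ℝ)
    (Gu Ghat : (E → ℝ) → E → ℝ)
    (hu : E → ℝ) (ρu ρhat : ℝ)
    -- integrability with respect to ν_hat
    (hint₁ : Integrable hu νhat) (hint₂ : Integrable (fun x => Ghat hu x) νhat)
    (hint₃ : Integrable Lchat νhat) (hint₄ : Integrable (fun x => Lfhat x + Hrhat x) νhat)
    -- ν_hat is invariant for the kernel of hat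
    (hinv : ∫ x, Ghat hu x ∂νhat = ∫ x, hu x ∂νhat)
    (hDpos : 0 < ∫ x, Lchat x ∂νhat)
    -- the pseudo-Poisson equation for u
    (hpoisson : ∀ x, hu x = -ρu * Lcu x + Lfu x + Hru x + Gu hu x)
    -- hat achieves the pointwise minimum
    (himp : ∀ x, -ρu * Lchat x + Lfhat x + Hrhat x + Ghat hu x ≤
      -ρu * Lcu x + Lfu x + Hru x + Gu hu x)
    -- definition of ρ_hat as the ratio of averaged costs
    (hρhat : ρhat = (∫ x, (Lfhat x + Hrhat x) ∂νhat) / ∫ x, Lchat x ∂νhat) :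
    ρhat ≤ ρu := by
  have hsuper : ∀ x, -ρu * Lchat x + (Lfhat x + Hrhat x) + Ghat hu x ≤ hu x := fun x => by
    linarith [himp x, hpoisson x]
  rw [hρhat, div_le_iff₀ hDpos]
  exact integral_le_mul_integral_of_supersolution hint₄ hint₃ hint₁ hint₂ hinv (ae_of_all _ hsuper)

/-- policy improvement decreases the average cost: if `hat` achieves
the pointwise minimum in the one-stage optimization associated to the solution
`(ρ_u, h_u)` of the pseudo-Poisson equation for `u`, then `ρ_hat ≤ ρ_u`. -/
theorem policy_improvement
    {E : Type*} [MeasurableSpace E]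
    (νu νhat : Measure E) [IsProbabilityMeasure νu] [IsProbabilityMeasure νhat]
    -- the functionals associated to the policies u and hat
    (Lcu Lfu Hru Lchat Lfhat Hrhat : E → ℝ)
    (Gu Ghat : (E → ℝ) → E → ℝ)
    (hLcupos : ∀ x, 0 < Lcu x) (hLchatpos : ∀ x, 0 < Lchat x)
    (hLfu : ∀ x, 0 ≤ Lfu x) (hHru : ∀ x, 0 ≤ Hru x)
    (hLfhat : ∀ x, 0 ≤ Lfhat x) (hHrhat : ∀ x, 0 ≤ Hrhat x)
    (hu : E → ℝ) (ρu ρhat : ℝ)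
    -- integrability with respect to ν_hat
    (hint₁ : Integrable hu νhat) (hint₂ : Integrable (fun x => Ghat hu x) νhat)
    (hint₃ : Integrable Lchat νhat) (hint₄ : Integrable (fun x => Lfhat x + Hrhat x) νhat)
    -- ν_hat is invariant for the kernel of hat
    (hinv : ∫ x, Ghat hu x ∂νhat = ∫ x, hu x ∂νhat)
    (hDpos : 0 < ∫ x, Lchat x ∂νhat)
    -- the pseudo-Poisson equation for u
    (hpoisson : ∀ x, hu x = -ρu * Lcu x + Lfu x + Hru x + Gu hu x)
    -- hat achieves the pointwise minimum
    (himp : ∀ x, -ρu * Lchat x + Lfhat x + Hrhat x + Ghat hu x ≤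
      -ρu * Lcu x + Lfu x + Hru x + Gu hu x)
    -- definition of ρ_hat as the ratio of averaged costs
    (hρhat : ρhat = (∫ x, (Lfhat x + Hrhat x) ∂νhat) / ∫ x, Lchat x ∂νhat)
    -- the pseudo-Poisson equation for hat holds analogously
    (hpoissonhat : ∃ hhat : E → ℝ, ∀ x, hhat x = -ρhat * Lchat x + Lfhat x + Hrhat x + Ghat hhat x) :
    ρhat ≤ ρu :=
  policy_improvement_general νhat Lcu Lfu Hru Lchat Lfhat Hrhat Gu Ghat hu ρu ρhat hint₁ hint₂ hint₃
    hint₄ hinv hDpos hpoisson himp hρhat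
end

section
/- Uniform bound on the PIA value functions: if (ρ_n, h_n) is the sequence generated by the policy iteration algorithm, then ‖h_n‖_g ≤ a·max{ρ_0 K_λ, M(1+bK_λ)/c}/(1−κ) for all n, where the constants come from the expected-growth and geometric-ergodicity assumptions. -/
/-! Since `ν_{u_n}(w_n) = 0`, geometric ergodicity makes the iterates `G^k w_n` decay like
`a C_n κ^k g`, where `C_n = max{ρ_n K_λ, M(1+bK_λ)/c}` bounds `w_n` in the `g`-norm; summing the
geometric series bounds `h_n` by `a C_n g / (1 - κ)`, and `C_n ≤ C_0` because `ρ_n ≤ ρ_0`. -/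

theorem norm_tsum_le_of_norm_le_geometric {F : Type*} [SeminormedAddCommGroup F]
    {f : ℕ → F} {C κ : ℝ} (hκ0 : 0 ≤ κ) (hκ1 : κ < 1) (hf : ∀ k, ‖f k‖ ≤ C * κ ^ k) :
    ‖∑' k, f k‖ ≤ C / (1 - κ) :=
  tsum_of_norm_bounded ((hasSum_geometric_of_lt_one hκ0 hκ1).mul_left C) hf

theorem pia_value_functions_uniform_bound_general
    {E : Type*}
    (g : E → ℝ) (hg : ∀ x, 1 ≤ g x)
    (a κ Klam M b c : ℝ)
    (ha : 0 < a) (hκ0 : 0 < κ) (hκ1 : κ < 1)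
    (hKlam : 0 < Klam)
    -- the kernel operator and the "integral against ν_{u_n}" functional
    (Gop : ℕ → (E → ℝ) → E → ℝ) (intν : ℕ → (E → ℝ) → ℝ)
    (ρ : ℕ → ℝ) (w : ℕ → E → ℝ) (h : ℕ → E → ℝ)
    -- h_n is the series of iterates of the one-step cost w_n
    (hrep : ∀ n x, h n x = ∑' k : ℕ, (Gop n)^[k] (w n) x)
    -- the bound on w_n coming from 0 ≤ Lf+Hr ≤ (M(1+bK_λ)/c)·g and 0 < ℒ ≤ K_λ
    (hwbd : ∀ n x, |w n x| ≤ max (ρ n * Klam) (M * (1 + b * Klam) / c) * g x)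
    -- geometric ergodicity for each policy u_n
    (herg : ∀ n (v : E → ℝ) (C : ℝ), (∀ x, |v x| ≤ C * g x) →
      ∀ (k : ℕ) (x : E), |(Gop n)^[k] v x - intν n v| ≤ a * C * κ ^ k * g x)
    (hzero : ∀ n, intν n (w n) = 0)
    -- monotonicity of the average costs
    (hρmono : ∀ n, ρ n ≤ ρ 0) :
    ∀ n x, |h n x| ≤ a * max (ρ 0 * Klam) (M * (1 + b * Klam) / c) / (1 - κ) * g x := by
  intro n x
  set K := M * (1 + b * Klam) / c
  have hgx : 0 ≤ g x := zero_le_one.trans (hg x)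
  have hCn : max (ρ n * Klam) K ≤ max (ρ 0 * Klam) K :=
    max_le_max_right K (mul_le_mul_of_nonneg_right (hρmono n) hKlam.le)
  have hdecay : ∀ k, ‖(Gop n)^[k] (w n) x‖ ≤ a * max (ρ n * Klam) K * g x * κ ^ k := by
    intro k
    have := herg n (w n) _ (hwbd n) k x
    rwa [hzero n, sub_zero, mul_right_comm] at this
  rw [hrep n x]
  calc |∑' k, (Gop n)^[k] (w n) x| ≤ a * max (ρ n * Klam) K * g x / (1 - κ) :=
        norm_tsum_le_of_norm_le_geometric hκ0.le hκ1 hdecay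
    _ ≤ a * max (ρ 0 * Klam) K * g x / (1 - κ) := by gcongr
    _ = a * max (ρ 0 * Klam) K / (1 - κ) * g x := by ring

/-- uniform bound on the PIA value functions:
`‖h_n‖_g ≤ a·max{ρ₀K_λ, M(1+bK_λ)/c}/(1-κ)` for all `n`. -/
theorem pia_value_functions_uniform_bound
    {E : Type*}
    (g : E → ℝ) (hg : ∀ x, 1 ≤ g x)
    (a κ Klam M b c : ℝ)
    (ha : 0 < a) (hκ0 : 0 < κ) (hκ1 : κ < 1)
    (hKlam : 0 < Klam) (hM : 0 ≤ M) (hb : 0 ≤ b) (hc : 0 < c)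
    -- the kernel operator and the "integral against ν_{u_n}" functional
    (Gop : ℕ → (E → ℝ) → E → ℝ) (intν : ℕ → (E → ℝ) → ℝ)
    (ρ : ℕ → ℝ) (w : ℕ → E → ℝ) (h : ℕ → E → ℝ)
    -- h_n is the series of iterates of the one-step cost w_n
    (hrep : ∀ n x, h n x = ∑' k : ℕ, (Gop n)^[k] (w n) x)
    -- the bound on w_n coming from 0 ≤ Lf+Hr ≤ (M(1+bK_λ)/c)·g and 0 < ℒ ≤ K_λ
    (hwbd : ∀ n x, |w n x| ≤ max (ρ n * Klam) (M * (1 + b * Klam) / c) * g x)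
    -- geometric ergodicity for each policy u_n
    (herg : ∀ n (v : E → ℝ) (C : ℝ), (∀ x, |v x| ≤ C * g x) →
      ∀ (k : ℕ) (x : E), |(Gop n)^[k] v x - intν n v| ≤ a * C * κ ^ k * g x)
    (hzero : ∀ n, intν n (w n) = 0)
    -- monotonicity of the average costs
    (hρpos : ∀ n, 0 ≤ ρ n) (hρmono : ∀ n, ρ n ≤ ρ 0) :
    ∀ n x, |h n x| ≤ a * max (ρ 0 * Klam) (M * (1 + b * Klam) / c) / (1 - κ) * g x :=
  pia_value_functions_uniform_bound_general g hg a κ Klam M b c ha hκ0 hκ1 hKlam Gop intν ρ w h hrep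
    hwbd herg hzero hρmono
end

section
/- Existence of a pointwise accumulation selector: let (V(x))_{x∈E} be a measurable family of nonempty compact subsets of a compact metrizable space V, and let (θ_k)_{k∈ℕ} be a sequence of measurable selectors θ_k : E → V with θ_k(x) ∈ V(x) for all x. Then there exists a measurable selector θ : E → V with θ(x) ∈ V(x) such that for every x ∈ E, θ(x) is an accumulation point of the sequence (θ_k(x))_k, i.e. there is a subsequence k_i = k_i(x) (depending on x) with θ_{k_i}(x) → θ(x). -/
/-!
The set L(x) of cluster points of (θ_k(x))_k is nonempty and closed, lies in V(x), and is weakly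
measurable: writing an open U as a countable union of interiors of compact sets K ⊆ U, L(x) meets
U iff θ_k(x) ∈ K frequently for one of these K. The Kuratowski–Ryll-Nardzewski construction then
selects from L measurably: picking points of a dense sequence gives measurable g_n such that L(x)
meets the ball of radius 2⁻ⁿ around g_n(x) and dist(g_{n+1}(x), g_n(x)) < 3/2 · 2⁻ⁿ; the pointwise
limit of the g_n is a measurable selector of L.
-/

open Filter Metric Set TopologicalSpace Topology

theorem IsOpen.exists_countable_isCompact_cover {X : Type*} [TopologicalSpace X]
    [LocallyCompactSpace X] [SecondCountableTopology X] {U : Set X} (hU : IsOpen U) :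
    ∃ T : Set (Set X), T.Countable ∧ (∀ K ∈ T, IsCompact K ∧ K ⊆ U) ∧
      U ⊆ ⋃ K ∈ T, interior K := by
  choose K hKc hvK hKU using fun v : U => exists_compact_subset hU v.2
  obtain ⟨S, hSc, hSU⟩ :=
    isOpen_iUnion_countable (fun v => interior (K v)) fun _ => isOpen_interior
  refine ⟨K '' S, hSc.image K, forall_mem_image.2 fun v _ => ⟨hKc v, hKU v⟩, fun v hv => ?_⟩
  rw [biUnion_image, hSU]
  exact mem_iUnion.2 ⟨⟨v, hv⟩, hvK _⟩

theorem mapClusterPt_inter_nonempty_iff_exists_frequently {ι X : Type*} [TopologicalSpace X]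
    {l : Filter ι} {u : ι → X} {U : Set X} {T : Set (Set X)}
    (hT : ∀ K ∈ T, IsCompact K ∧ K ⊆ U) (hUT : U ⊆ ⋃ K ∈ T, interior K) :
    ({v | MapClusterPt v l u} ∩ U).Nonempty ↔ ∃ K ∈ T, ∃ᶠ i in l, u i ∈ K := by
  constructor
  · rintro ⟨v, hv, hvU⟩
    obtain ⟨K, hK, hvK⟩ := mem_iUnion₂.1 (hUT hvU)
    exact ⟨K, hK, (hv.frequently (isOpen_interior.mem_nhds hvK)).mono
      fun _ h => interior_subset h⟩
  · rintro ⟨K, hK, hfreq⟩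
    obtain ⟨v, hvK, hv⟩ := (hT K hK).1.exists_mapClusterPt_of_frequently hfreq
    exact ⟨v, hv, (hT K hK).2 hvK⟩

def WeaklyMeasurable {E V : Type*} [MeasurableSpace E] [TopologicalSpace V] (L : E → Set V) :
    Prop :=
  ∀ U, IsOpen U → MeasurableSet {x | (L x ∩ U).Nonempty}

section Measurability

variable {E V : Type*} [MeasurableSpace E] [MeasurableSpace V]

theorem measurableSet_setOf_frequently_mem {f : ℕ → E → V} (hf : ∀ k, Measurable (f k))
    {s : Set V} (hs : MeasurableSet s) : MeasurableSet {x | ∃ᶠ k in atTop, f k x ∈ s} := by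
  convert MeasurableSet.measurableSet_limsup fun k => hf k hs using 1
  ext x
  exact mem_limsup_iff_frequently_mem (s := fun k => f k ⁻¹' s) |>.symm

theorem weaklyMeasurable_setOf_mapClusterPt [TopologicalSpace V] [LocallyCompactSpace V]
    [SecondCountableTopology V] [T2Space V] [OpensMeasurableSpace V]
    {f : ℕ → E → V} (hf : ∀ k, Measurable (f k)) :
    WeaklyMeasurable fun x => {v | MapClusterPt v atTop (f · x)} := by
  intro U hU
  obtain ⟨T, hTc, hT, hUT⟩ := hU.exists_countable_isCompact_cover
  have hset : {x | ({v | MapClusterPt v atTop (f · x)} ∩ U).Nonempty} =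
      ⋃ K ∈ T, {x | ∃ᶠ k in atTop, f k x ∈ K} := by
    ext x
    simpa only [mem_ofPred_eq, mem_iUnion₂, exists_prop] using
      mapClusterPt_inter_nonempty_iff_exists_frequently hT hUT
  rw [hset]
  exact .biUnion hTc fun K hK => measurableSet_setOf_frequently_mem hf (hT K hK).1.measurableSet

end Measurability

section MeasurableSelection

variable {E V : Type*} [MeasurableSpace E] [MetricSpace V] [SeparableSpace V]
  [MeasurableSpace V] {L : E → Set V}

theorem exists_measurable_inter_ball_nonempty [Nonempty V]
    (hL : WeaklyMeasurable L) (hLne : ∀ x, (L x).Nonempty)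
    {s : ℝ} (hs : 0 < s) :
    ∃ g : E → V, Measurable g ∧ ∀ x, (L x ∩ ball (g x) s).Nonempty := by
  classical
  have hex : ∀ x, ∃ i, (L x ∩ ball (denseSeq V i) s).Nonempty := fun x => by
    obtain ⟨v, hv⟩ := hLne x
    obtain ⟨i, hi⟩ := (denseRange_denseSeq V).exists_dist_lt v hs
    exact ⟨i, v, hv, hi⟩
  exact ⟨fun x => denseSeq V (Nat.find (hex x)),
    .find (fun _ => measurable_const) (fun _ => hL _ isOpen_ball) hex,
    fun x => Nat.find_spec (hex x)⟩

theorem exists_measurable_inter_ball_nonempty_near [Nonempty V] [OpensMeasurableSpace V]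
    (hL : WeaklyMeasurable L)
    {g : E → V} (hg : Measurable g) {r s : ℝ} (hgL : ∀ x, (L x ∩ ball (g x) r).Nonempty)
    (hs : 0 < s) :
    ∃ g' : E → V, (Measurable g' ∧ ∀ x, (L x ∩ ball (g' x) s).Nonempty) ∧
      ∀ x, dist (g' x) (g x) < s + r := by
  classical
  have hex : ∀ x, ∃ i, (L x ∩ ball (denseSeq V i) s).Nonempty ∧
      dist (denseSeq V i) (g x) < s + r := fun x => by
    obtain ⟨v, hv, hvg⟩ := hgL x
    obtain ⟨i, hi⟩ := (denseRange_denseSeq V).exists_dist_lt v hs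
    refine ⟨i, ⟨v, hv, hi⟩, ?_⟩
    calc dist (denseSeq V i) (g x) ≤ dist v (denseSeq V i) + dist v (g x) :=
          dist_triangle_left _ _ _
      _ < s + r := add_lt_add hi hvg
  have hmeas : ∀ i, MeasurableSet {x | (L x ∩ ball (denseSeq V i) s).Nonempty ∧
      dist (denseSeq V i) (g x) < s + r} := fun i => by
    simp_rw [dist_comm (denseSeq V i)]
    exact (hL _ isOpen_ball).inter (hg measurableSet_ball)
  exact ⟨fun x => denseSeq V (Nat.find (hex x)),
    ⟨.find (fun _ => measurable_const) hmeas hex, fun x => (Nat.find_spec (hex x)).1⟩,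
    fun x => (Nat.find_spec (hex x)).2⟩

theorem exists_seq_measurable_inter_ball_nonempty [Nonempty V] [OpensMeasurableSpace V]
    (hL : WeaklyMeasurable L) (hLne : ∀ x, (L x).Nonempty) :
    ∃ G : ℕ → E → V, (∀ n, Measurable (G n)) ∧
      (∀ n x, (L x ∩ ball (G n x) ((1 / 2) ^ n)).Nonempty) ∧
      ∀ n x, dist (G (n + 1) x) (G n x) < 3 / 2 * (1 / 2) ^ n := by
  let P : ℕ → (E → V) → Prop := fun n g =>
    Measurable g ∧ ∀ x, (L x ∩ ball (g x) ((1 / 2) ^ n)).Nonempty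
  obtain ⟨g₀, hg₀⟩ : ∃ g₀, P 0 g₀ :=
    exists_measurable_inter_ball_nonempty hL hLne (by positivity)
  have step : ∀ n g, P n g → ∃ g', P (n + 1) g' ∧
      ∀ x, dist (g' x) (g x) < (1 / 2) ^ (n + 1) + (1 / 2) ^ n := fun n g hg =>
    exists_measurable_inter_ball_nonempty_near hL hg.1 hg.2 (by positivity)
  choose! F hF hFdist using step
  let G : ℕ → E → V := fun n => Nat.rec (motive := fun _ => E → V) g₀ F n
  have hG : ∀ n, P n (G n) := fun n => by
    induction n with
    | zero => exact hg₀
    | succ n ih => exact hF n _ ih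
  refine ⟨G, fun n => (hG n).1, fun n => (hG n).2, fun n x => ?_⟩
  calc dist (G (n + 1) x) (G n x) < (1 / 2) ^ (n + 1) + (1 / 2) ^ n := hFdist n _ (hG n) x
    _ = 3 / 2 * (1 / 2) ^ n := by ring

theorem exists_measurable_selector [CompleteSpace V] [BorelSpace V]
    (hL : WeaklyMeasurable L) (hLne : ∀ x, (L x).Nonempty)
    (hLcl : ∀ x, IsClosed (L x)) :
    ∃ θ : E → V, Measurable θ ∧ ∀ x, θ x ∈ L x := by
  rcases isEmpty_or_nonempty V with hV | hV
  · have : IsEmpty E := ⟨fun x => (hLne x).elim fun v _ => hV.elim v⟩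
    exact ⟨isEmptyElim, measurable_of_empty _, isEmptyElim⟩
  obtain ⟨G, hGm, hGL, hGdist⟩ := exists_seq_measurable_inter_ball_nonempty hL hLne
  have hconv : ∀ x, ∃ v, Tendsto (G · x) atTop (𝓝 v) := fun x =>
    cauchySeq_tendsto_of_complete <|
      cauchySeq_of_le_geometric (f := (G · x)) (1 / 2) (3 / 2) (by norm_num) fun n => by
        rw [dist_comm]; exact (hGdist n x).le
  choose θ hθ using hconv
  refine ⟨θ, measurable_of_tendsto_metrizable hGm (tendsto_pi_nhds.2 hθ), fun x => ?_⟩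
  rw [← (hLcl x).closure_eq, Metric.mem_closure_iff]
  intro ε hε
  have hpow : Tendsto (fun n : ℕ => (1 / 2 : ℝ) ^ n) atTop (𝓝 0) :=
    tendsto_pow_atTop_nhds_zero_of_lt_one (by norm_num) (by norm_num)
  obtain ⟨n, hnθ, hnε⟩ := ((hθ x).eventually (ball_mem_nhds _ (half_pos hε))).and
    (hpow.eventually (gt_mem_nhds (half_pos hε))) |>.exists
  obtain ⟨v, hv, hvG⟩ := hGL n x
  refine ⟨v, hv, ?_⟩
  calc dist (θ x) v ≤ dist (G n x) (θ x) + dist (G n x) v := dist_triangle_left _ _ _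
    _ < ε / 2 + ε / 2 := add_lt_add hnθ ((dist_comm _ _).trans_lt hvG |>.trans hnε)
    _ = ε := add_halves ε

end MeasurableSelection

theorem accumulation_selector_general
    {E V : Type*} [MeasurableSpace E]
    [TopologicalSpace V] [CompactSpace V] [TopologicalSpace.MetrizableSpace V]
    [MeasurableSpace V] [BorelSpace V]
    (Vset : E → Set V)
    (hVcompact : ∀ x, IsCompact (Vset x))
    (θk : ℕ → E → V)
    (hθk_meas : ∀ k, Measurable (θk k))
    (hθk_mem : ∀ k x, θk k x ∈ Vset x) :
    ∃ θ : E → V, Measurable θ ∧ (∀ x, θ x ∈ Vset x) ∧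
      ∀ x, ∃ φ : ℕ → ℕ, StrictMono φ ∧
        Tendsto (fun i => θk (φ i) x) atTop (nhds (θ x)) := by
  let : MetricSpace V := metrizableSpaceMetric V
  obtain ⟨θ, hθm, hθ⟩ := exists_measurable_selector (weaklyMeasurable_setOf_mapClusterPt hθk_meas)
    (fun x => exists_clusterPt_of_compactSpace _) (fun x => isClosed_setOfPred_clusterPt)
  exact ⟨θ, hθm, fun x => (hVcompact x).isClosed.mem_of_mapClusterPt (hθ x)
    (.of_forall (hθk_mem · x)), fun x => (hθ x).tendsto_subseq⟩

/-- existence of a pointwise accumulation selector (Schäl):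
given a measurable compact-valued multifunction `x ↦ V(x)` in a compact
metrizable space and measurable selectors `θ_k`, there is a measurable selector
`θ` such that `θ(x)` is an accumulation point of `(θ_k(x))_k` for every `x`. -/
theorem accumulation_selector
    {E V : Type*} [MeasurableSpace E]
    [TopologicalSpace V] [CompactSpace V] [TopologicalSpace.MetrizableSpace V]
    [MeasurableSpace V] [BorelSpace V]
    (Vset : E → Set V)
    (hVne : ∀ x, (Vset x).Nonempty)
    (hVcompact : ∀ x, IsCompact (Vset x))
    -- measurability of the multifunction
    (hVmeas : ∀ s : Set V, IsOpen s → MeasurableSet {x | (Vset x ∩ s).Nonempty})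
    (θk : ℕ → E → V)
    (hθk_meas : ∀ k, Measurable (θk k))
    (hθk_mem : ∀ k x, θk k x ∈ Vset x) :
    ∃ θ : E → V, Measurable θ ∧ (∀ x, θ x ∈ Vset x) ∧
      ∀ x, ∃ φ : ℕ → ℕ, StrictMono φ ∧
        Tendsto (fun i => θk (φ i) x) atTop (nhds (θ x)) :=
  accumulation_selector_general Vset hVcompact θk hθk_meas hθk_mem
end
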